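/- arXiv:2109.01897 — 7 statements merged into one kernel-verified Lean document; each statement's English description precedes it below -/
import Mathlib

section
/- In the multi-species batch model, for two distinct species i ≠ j and any particles k of species i and ℓ of species j, the probability that (i,k) and (j,ℓ) lie in the same super-batch, i.e. that a_i(k) = a_j(ℓ), equals min{b_i, b_j}/(b_i · b_j). -/
/-!
Let `∏ₘ Perm (Fin Nₘ)` act on pairs of particles `Fin N_i × Fin N_j` by
`σ • (x, y) = (σ_i x, σ_j y)`. Since `i ≠ j` this action is transitive, so all fibres of the orbit
map `σ ↦ σ • (k, ℓ)` have the same size: the pair `(σ_i k, σ_j ℓ)` is uniformly distributed.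
The probability is thus the proportion of pairs `(x, y)` with `⌊x / p_i⌋ = ⌊y / p_j⌋`; there are
`p_i p_j` such pairs for each of the `min b_i b_j` common batch indices, out of `b_i p_i b_j p_j`.
-/

open Finset Equiv

namespace MulAction

variable {G β : Type*} [Group G] [Fintype G] [MulAction G β] [IsPretransitive G β] [DecidableEq β]

theorem card_filter_smul_eq_eq (a b b' : β) :
    #{g : G | g • a = b} = #{g : G | g • a = b'} := by
  obtain ⟨g₀, rfl⟩ := exists_smul_eq G b b'
  refine card_equiv (Equiv.mulLeft g₀) fun g => ?_
  simp [mul_smul, smul_left_cancel_iff]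

variable [Fintype β]

theorem card_filter_smul_eq_card_mul (a : β) (P : β → Prop) [DecidablePred P] :
    #{g : G | P (g • a)} = #{b | P b} * #{g : G | g • a = a} := by
  rw [card_eq_sum_card_fiberwise (f := (· • a)) (t := {b | P b}) (by intro g; simp)]
  refine sum_const_nat fun b hb => ?_
  rw [filter_filter, ← card_filter_smul_eq_eq a b a]
  congr 1
  ext g
  simp only [mem_filter, mem_univ, true_and, and_iff_right_iff_imp]
  rintro rfl
  simpa using hb

theorem card_filter_smul_div_card {K : Type*} [Semifield K] [CharZero K] (a : β)
    (P : β → Prop) [DecidablePred P] :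
    (#{g : G | P (g • a)} : K) / Fintype.card G = #{b | P b} / Fintype.card β := by
  have hG : Fintype.card G = Fintype.card β * #{g : G | g • a = a} := by
    simpa using card_filter_smul_eq_card_mul a fun _ => True
  have : Nonempty β := ⟨a⟩
  have hβ : Fintype.card β ≠ 0 := Fintype.card_ne_zero
  have hstab : #{g : G | g • a = a} ≠ 0 := card_ne_zero.2 ⟨1, by simp⟩
  rw [card_filter_smul_eq_card_mul, hG]
  push_cast
  field_simp

end MulAction

namespace Equiv.Perm

variable {ι : Type*} {X : ι → Type*}

def evalProdCongrHom (i j : ι) : (∀ m, Perm (X m)) →* Perm (X i × X j) where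
  toFun σ := (σ i).prodCongr (σ j)
  map_one' := rfl
  map_mul' _ _ := rfl

@[simp]
theorem evalProdCongrHom_apply (i j : ι) (σ : ∀ m, Perm (X m)) (x : X i × X j) :
    evalProdCongrHom i j σ x = (σ i x.1, σ j x.2) :=
  rfl

theorem exists_evalProdCongrHom_apply_eq [DecidableEq ι] {i j : ι} [DecidableEq (X i)]
    [DecidableEq (X j)] (hij : i ≠ j) (x y : X i × X j) :
    ∃ σ : ∀ m, Perm (X m), evalProdCongrHom i j σ x = y :=
  ⟨Pi.mulSingle i (swap x.1 y.1) * Pi.mulSingle j (swap x.2 y.2), by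
    simp [hij, hij.symm]⟩

end Equiv.Perm

theorem Fin.card_filter_div_eq {b p t : ℕ} (ht : t < b) :
    #{x : Fin (b * p) | (x : ℕ) / p = t} = p :=
  calc #{x : Fin (b * p) | (x : ℕ) / p = t}
      = #(({⟨t, ht⟩} : Finset (Fin b)) ×ˢ (univ : Finset (Fin p))) :=
        card_equiv finProdFinEquiv.symm fun x => by
          simp only [mem_filter, mem_univ, true_and, mem_product, mem_singleton, and_true]
          simp [Fin.ext_iff]
    _ = p := by simp

theorem Fin.card_filter_div_eq_div (b p c q : ℕ) :
    #{xy : Fin (b * p) × Fin (c * q) | (xy.1 : ℕ) / p = (xy.2 : ℕ) / q} = min b c * (p * q) := by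
  have hbatch : ∀ xy ∈ ({xy : Fin (b * p) × Fin (c * q) | (xy.1 : ℕ) / p = (xy.2 : ℕ) / q} :
      Finset _), (xy.1 : ℕ) / p ∈ range (min b c) := by
    intro xy hxy
    rw [mem_filter] at hxy
    rw [mem_range, lt_min_iff, hxy.2]
    exact ⟨hxy.2 ▸ Nat.div_lt_of_lt_mul (mul_comm b p ▸ xy.1.isLt),
      Nat.div_lt_of_lt_mul (mul_comm c q ▸ xy.2.isLt)⟩
  rw [card_eq_sum_card_fiberwise hbatch, sum_const_nat (m := p * q), card_range]
  intro t ht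
  rw [mem_range, lt_min_iff] at ht
  calc _ = #((univ.filter fun x : Fin (b * p) => (x : ℕ) / p = t) ×ˢ
          (univ.filter fun y : Fin (c * q) => (y : ℕ) / q = t)) := by
        refine congrArg card (ext fun xy => ?_)
        simp only [mem_filter, mem_univ, true_and, mem_product]
        constructor
        · rintro ⟨h, rfl⟩; exact ⟨rfl, h.symm⟩
        · rintro ⟨h1, h2⟩; exact ⟨h1.trans h2.symm, h1⟩
    _ = p * q := by rw [card_product, card_filter_div_eq ht.1, card_filter_div_eq ht.2]

theorem cross_species_same_superbatch_prob_general
    (n : ℕ) (b p N : Fin n → ℕ)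
    (hN : ∀ m, N m = b m * p m)
    (i j : Fin n) (hij : i ≠ j) (k : Fin (N i)) (ℓ : Fin (N j)) :
    ((Finset.univ.filter (fun σ : ∀ m : Fin n, Equiv.Perm (Fin (N m)) =>
        (σ i k : ℕ) / p i = (σ j ℓ : ℕ) / p j)).card : ℝ) /
      (Fintype.card (∀ m : Fin n, Equiv.Perm (Fin (N m))) : ℝ)
    = (min (b i) (b j) : ℝ) / ((b i : ℝ) * (b j : ℝ)) := by
  let _ : MulAction (∀ m, Perm (Fin (N m))) (Fin (N i) × Fin (N j)) :=
    .compHom _ (Perm.evalProdCongrHom i j)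
  have _ : MulAction.IsPretransitive (∀ m, Perm (Fin (N m))) (Fin (N i) × Fin (N j)) :=
    ⟨Perm.exists_evalProdCongrHom_apply_eq (X := fun m => Fin (N m)) hij⟩
  have hpi : (p i : ℝ) ≠ 0 := Nat.cast_ne_zero.2 (right_ne_zero_of_mul (hN i ▸ k.pos.ne'))
  have hpj : (p j : ℝ) ≠ 0 := Nat.cast_ne_zero.2 (right_ne_zero_of_mul (hN j ▸ ℓ.pos.ne'))
  refine (MulAction.card_filter_smul_div_card (k, ℓ)
    fun xy => (xy.1 : ℕ) / p i = (xy.2 : ℕ) / p j).trans ?_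
  have hcount := Fin.card_filter_div_eq_div (b i) (p i) (b j) (p j)
  rw [← hN i, ← hN j] at hcount
  rw [hcount, Fintype.card_prod, Fintype.card_fin, Fintype.card_fin, hN i, hN j]
  push_cast
  field_simp

/-- In the multi-species batch model (independent uniform
permutations `σ i` of `Fin (N i)`, batch index of particle `k` of species `i`
being `⌊σ i k / p i⌋`), for two distinct species `i ≠ j`, the probability that a
particle `k` of species `i` and a particle `ℓ` of species `j` lie in the same
super-batch equals `min (b i) (b j) / (b i * b j)`. -/
theorem cross_species_same_superbatch_prob
    (n : ℕ) (hn : 2 ≤ n) (b p N : Fin n → ℕ)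
    (hb : ∀ m, 1 ≤ b m) (hp : ∀ m, 2 ≤ p m) (hN : ∀ m, N m = b m * p m)
    (i j : Fin n) (hij : i ≠ j) (k : Fin (N i)) (ℓ : Fin (N j)) :
    ((Finset.univ.filter (fun σ : ∀ m : Fin n, Equiv.Perm (Fin (N m)) =>
        (σ i k : ℕ) / p i = (σ j ℓ : ℕ) / p j)).card : ℝ) /
      (Fintype.card (∀ m : Fin n, Equiv.Perm (Fin (N m))) : ℝ)
    = (min (b i) (b j) : ℝ) / ((b i : ℝ) * (b j : ℝ)) :=
  cross_species_same_superbatch_prob_general n b p N hN i j hij k ℓ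
end

section
/- In the multi-species batch model, for three pairwise distinct species i, j, j' and particles k of species i, ℓ of species j, ℓ' of species j', the probability of the joint event a_i(k) = a_j(ℓ) and a_i(k) = a_{j'}(ℓ') equals min{b_i, b_j, b_{j'}}/(b_i · b_j · b_{j'}). -/
/-!
Evaluating independent permutations of the species at one particle from each of three distinct
species is the orbit map of a transitive action of the product of the permutation groups on
`Fin N_i × Fin N_j × Fin N_j'`, so it carries the uniform distribution to the uniform one. The
batch index `y ↦ y / p` on `Fin (b * p)` takes each value `t < b` exactly `p` times, so the
triples with a common batch index number `min b_i b_j b_j' * (p_i * p_j * p_j')`.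
-/

open Finset Equiv MulAction

namespace MulAction

variable {G X : Type*} [Group G] [Fintype G] [MulAction G X] [IsPretransitive G X] [DecidableEq X]

theorem card_filter_smul_eq_eq_card_filter_smul_eq (x y z : X) :
    #{g : G | g • x = y} = #{g : G | g • x = z} := by
  obtain ⟨h, rfl⟩ := exists_smul_eq G y z
  refine card_nbij' (h * ·) (h⁻¹ * ·) ?_ ?_ ?_ ?_ <;> intro g hg <;> simp_all [mul_smul]

theorem card_filter_smul_mem_mul_card [Fintype X] (x : X) (s : Finset X) :
    #{g : G | g • x ∈ s} * Fintype.card X = #s * Fintype.card G := by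
  have hfiber (y : X) : #{g : G | g • x = y} = #{g : G | g • x = x} :=
    card_filter_smul_eq_eq_card_filter_smul_eq x y x
  have hG : Fintype.card G = Fintype.card X * #{g : G | g • x = x} := by
    rw [← card_univ, card_eq_sum_card_fiberwise (f := (· • x)) (t := univ) (by simp)]
    simp [hfiber]
  have hfiber_s : ∀ y ∈ s, #{g ∈ {g : G | g • x ∈ s} | g • x = y} = #{g : G | g • x = x} :=
    fun y hy => by rw [filter_filter, filter_congr (q := (· • x = y)) (by aesop), hfiber]
  rw [card_eq_sum_card_fiberwise (f := (· • x)) (t := s) (fun g hg => by simpa using hg), hG,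
    sum_congr rfl hfiber_s, sum_const, smul_eq_mul]
  ring

theorem card_filter_smul_mem_div_card {K : Type*} [Semifield K] [CharZero K] [Fintype X]
    (x : X) (s : Finset X) :
    (#{g : G | g • x ∈ s} : K) / Fintype.card G = #s / Fintype.card X := by
  have : Nonempty X := ⟨x⟩
  rw [div_eq_div_iff (Nat.cast_ne_zero.2 Fintype.card_ne_zero)
    (Nat.cast_ne_zero.2 Fintype.card_ne_zero)]
  exact_mod_cast card_filter_smul_mem_mul_card (G := G) x s

end MulAction

section TripleEval

variable {ι : Type*} {α : ι → Type*}

abbrev tripleEvalAction (i j k : ι) : MulAction (∀ m, Perm (α m)) (α i × α j × α k) where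
  smul σ x := (σ i x.1, σ j x.2.1, σ k x.2.2)
  one_smul _ := rfl
  mul_smul _ _ _ := rfl

theorem isPretransitive_tripleEvalAction [DecidableEq ι] [∀ m, DecidableEq (α m)] {i j k : ι}
    (hij : i ≠ j) (hik : i ≠ k) (hjk : j ≠ k) :
    @IsPretransitive _ _ (tripleEvalAction (α := α) i j k).toSMul := by
  let := tripleEvalAction (α := α) i j k
  refine ⟨fun x y => ⟨Pi.mulSingle i (swap x.1 y.1) * Pi.mulSingle j (swap x.2.1 y.2.1) *
    Pi.mulSingle k (swap x.2.2 y.2.2), ?_⟩⟩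
  change (_, _, _) = y
  simp [hij, hik, hjk, hij.symm, hik.symm, hjk.symm]

end TripleEval

theorem card_filter_eq_and_eq {A B C M : Type*} [Fintype A] [Fintype B] [Fintype C]
    [DecidableEq M] (u : A → M) (v : B → M) (w : C → M) (T : Finset M) (hu : ∀ a, u a ∈ T) :
    #{x : A × B × C | u x.1 = v x.2.1 ∧ u x.1 = w x.2.2}
      = ∑ t ∈ T, #{a | u a = t} * #{b | v b = t} * #{c | w c = t} := by
  rw [card_eq_sum_card_fiberwise (f := fun x => u x.1) (t := T) (fun x _ => hu x.1)]
  refine sum_congr rfl fun t _ => ?_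
  rw [mul_assoc, ← card_product, ← card_product, filter_filter]
  congr 1
  ext ⟨a, b, c⟩
  simp only [mem_filter, mem_univ, true_and, mem_product]
  grind

theorem Fin.card_filter_val_eq (b t : ℕ) :
    #{a : Fin b | (a : ℕ) = t} = if t < b then 1 else 0 := by
  split_ifs with h
  · exact card_eq_one.2 ⟨⟨t, h⟩, by ext a; simp [Fin.ext_iff]⟩
  · simp; omega

theorem Fin.card_filter_val_div_eq (b p t : ℕ) :
    #{y : Fin (b * p) | (y : ℕ) / p = t} = if t < b then p else 0 := by
  rw [card_equiv finProdFinEquiv.symm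
      (t := ({a : Fin b | (a : ℕ) = t} : Finset (Fin b)) ×ˢ (univ : Finset (Fin p))) (by simp),
    card_product, Fin.card_filter_val_eq, card_univ, Fintype.card_fin, ite_mul, one_mul, zero_mul]

theorem card_filter_div_eq_div_eq (b₁ b₂ b₃ p₁ p₂ p₃ : ℕ) :
    #{x : Fin (b₁ * p₁) × Fin (b₂ * p₂) × Fin (b₃ * p₃) |
        (x.1 : ℕ) / p₁ = (x.2.1 : ℕ) / p₂ ∧ (x.1 : ℕ) / p₁ = (x.2.2 : ℕ) / p₃}
      = min b₁ (min b₂ b₃) * (p₁ * p₂ * p₃) := by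
  have hquot (a : Fin (b₁ * p₁)) : (a : ℕ) / p₁ ∈ range b₁ :=
    mem_range.2 (Nat.div_lt_of_lt_mul (by simp [mul_comm]))
  rw [card_filter_eq_and_eq _ (fun y : Fin (b₂ * p₂) => (y : ℕ) / p₂)
    (fun z : Fin (b₃ * p₃) => (z : ℕ) / p₃) _ hquot]
  have hterm : ∀ t ∈ range b₁, (if t < b₁ then p₁ else 0) * (if t < b₂ then p₂ else 0) *
      (if t < b₃ then p₃ else 0) = if t ∈ range (min b₁ (min b₂ b₃)) then p₁ * p₂ * p₃ else 0 := by
    intro t ht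
    rw [mem_range] at ht
    simp only [mem_range, lt_min_iff, ht, true_and, if_true]
    split_ifs <;> simp_all
  simp only [Fin.card_filter_val_div_eq]
  rw [sum_congr rfl hterm, sum_ite_mem, inter_eq_right.2 (range_subset_range.2 (min_le_left _ _)),
    sum_const, card_range, smul_eq_mul]

theorem three_species_same_superbatch_prob_general
    (n : ℕ) (b p N : Fin n → ℕ)
    (hN : ∀ m, N m = b m * p m)
    (i j j' : Fin n) (hij : i ≠ j) (hij' : i ≠ j') (hjj' : j ≠ j')
    (k : Fin (N i)) (ℓ : Fin (N j)) (ℓ' : Fin (N j')) :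
    ((Finset.univ.filter (fun σ : ∀ m : Fin n, Equiv.Perm (Fin (N m)) =>
        (σ i k : ℕ) / p i = (σ j ℓ : ℕ) / p j ∧
        (σ i k : ℕ) / p i = (σ j' ℓ' : ℕ) / p j')).card : ℝ) /
      (Fintype.card (∀ m : Fin n, Equiv.Perm (Fin (N m))) : ℝ)
    = (min (b i) (min (b j) (b j')) : ℝ) / ((b i : ℝ) * (b j : ℝ) * (b j' : ℝ)) := by
  let := tripleEvalAction (α := fun m => Fin (N m)) i j j'
  have := isPretransitive_tripleEvalAction (α := fun m => Fin (N m)) hij hij' hjj'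
  have hp (m : Fin n) (x : Fin (N m)) : (p m : ℝ) ≠ 0 :=
    Nat.cast_ne_zero.2 (right_ne_zero_of_mul (hN m ▸ x.pos.ne'))
  calc _ = (#{x : Fin (N i) × Fin (N j) × Fin (N j') | (x.1 : ℕ) / p i = (x.2.1 : ℕ) / p j ∧
          (x.1 : ℕ) / p i = (x.2.2 : ℕ) / p j'} : ℝ) /
          Fintype.card (Fin (N i) × Fin (N j) × Fin (N j')) := by
        rw [← card_filter_smul_mem_div_card (G := ∀ m, Perm (Fin (N m))) (k, ℓ, ℓ')]
        congr 3
        ext σ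
        simp only [mem_filter, mem_univ, true_and]
        rfl
    _ = (min (b i) (min (b j) (b j')) * (p i * p j * p j') : ℕ) /
          (b i * p i * (b j * p j * (b j' * p j')) : ℕ) := by
        rw [Fintype.card_prod, Fintype.card_prod, Fintype.card_fin, Fintype.card_fin,
          Fintype.card_fin, hN i, hN j, hN j', card_filter_div_eq_div_eq]
    _ = _ := by
        push_cast
        field_simp [hp i k, hp j ℓ, hp j' ℓ']

/-- In the multi-species batch model, for three pairwise distinct
species `i, j, j'` and particles `k` (species `i`), `ℓ` (species `j`),
`ℓ'` (species `j'`), the probability of the joint event that the batch index of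
`k` (species `i`) coincides with those of `ℓ` and of `ℓ'` equals
`min (b i) (min (b j) (b j')) / (b i * b j * b j')`. -/
theorem three_species_same_superbatch_prob
    (n : ℕ) (hn : 3 ≤ n) (b p N : Fin n → ℕ)
    (hb : ∀ m, 1 ≤ b m) (hp : ∀ m, 2 ≤ p m) (hN : ∀ m, N m = b m * p m)
    (i j j' : Fin n) (hij : i ≠ j) (hij' : i ≠ j') (hjj' : j ≠ j')
    (k : Fin (N i)) (ℓ : Fin (N j)) (ℓ' : Fin (N j')) :
    ((Finset.univ.filter (fun σ : ∀ m : Fin n, Equiv.Perm (Fin (N m)) =>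
        (σ i k : ℕ) / p i = (σ j ℓ : ℕ) / p j ∧
        (σ i k : ℕ) / p i = (σ j' ℓ' : ℕ) / p j')).card : ℝ) /
      (Fintype.card (∀ m : Fin n, Equiv.Perm (Fin (N m))) : ℝ)
    = (min (b i) (min (b j) (b j')) : ℝ) / ((b i : ℝ) * (b j : ℝ) * (b j' : ℝ)) :=
  three_species_same_superbatch_prob_general n b p N hN i j j' hij hij' hjj' k ℓ ℓ'
end

section
/- In the multi-species batch model, for two distinct species i ≠ j, a particle k of species i, and two distinct particles ℓ ≠ ℓ' of species j, the probability of the joint event a_i(k) = a_j(ℓ) and a_i(k) = a_j(ℓ') equals min{b_i, b_j}(p_j − 1)/(b_i · b_j · (N_j − 1)). -/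
/-!
The event only involves the triple `(σ i k, σ j ℓ, σ j ℓ')`. Left multiplication in
`∀ m, Perm (Fin (N m))` permutes the triples with distinct last two entries transitively
(`i ≠ j`, and `Perm` is 2-transitive), so all fibres of this map have the same size and the
triple is uniformly distributed on `Fin (N i) × (Fin (N j)).offDiag`. A favourable triple is a
choice of `x` whose batch `x / p i` also exists in species `j` (`min (b i) (b j) * p i`
choices) and an ordered pair of distinct elements of that batch of species `j`
(`p j * (p j - 1)` choices), out of `N i * N j * (N j - 1)` triples in all.
-/

open Finset Equiv

section UniformPushforward

variable {α β : Type*} [Fintype α] [DecidableEq β] {f : α → β} {t : Finset β} {c : ℕ}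

theorem card_filter_apply_mem_eq_card_mul (hc : ∀ b ∈ t, #{a | f a = b} = c) {s : Finset β}
    (hs : s ⊆ t) : #{a | f a ∈ s} = #s * c := by
  rw [card_eq_sum_card_fiberwise (s := {a | f a ∈ s}) fun a ha => (mem_filter.1 ha).2,
    ← smul_eq_mul, ← sum_const]
  refine sum_congr rfl fun b hb => ?_
  rw [filter_filter, ← hc b (hs hb)]
  exact congrArg card (filter_congr fun a _ => and_iff_right_of_imp fun h => h ▸ hb)

theorem card_filter_comp_div_card [Nonempty α] {K : Type*} [Semifield K] [CharZero K]
    (hft : ∀ a, f a ∈ t) (hc : ∀ b ∈ t, #{a | f a = b} = c) (P : β → Prop) [DecidablePred P] :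
    (#{a | P (f a)} : K) / Fintype.card α = #{b ∈ t | P b} / #t := by
  have hP : #{a | P (f a)} = #{b ∈ t | P b} * c := by
    simpa [hft] using card_filter_apply_mem_eq_card_mul hc (filter_subset P t)
  have hα : Fintype.card α = #t * c := by
    simpa [hft] using card_filter_apply_mem_eq_card_mul hc subset_rfl
  have hc0 : c ≠ 0 := right_ne_zero_of_mul (hα ▸ Fintype.card_ne_zero)
  rw [hP, hα]
  push_cast
  exact mul_div_mul_right _ _ (Nat.cast_ne_zero.2 hc0)

end UniformPushforward

section PiPerm

variable {ι : Type*} [DecidableEq ι] {α : ι → Type*} [∀ m, DecidableEq (α m)] {i j : ι}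

theorem exists_pi_perm_apply_eq (hij : i ≠ j) (x x' : α i) {y y' z z' : α j} (hy : y ≠ y')
    (hz : z ≠ z') : ∃ τ : ∀ m, Perm (α m), τ i x = x' ∧ τ j y = z ∧ τ j y' = z' := by
  obtain ⟨τj, hτy, hτy'⟩ :=
    MulAction.is_two_pretransitive_iff.mp (Perm.isMultiplyPretransitive (α j) 2) hy hz
  refine ⟨Pi.mulSingle i (swap x x') * Pi.mulSingle j τj, ?_, ?_, ?_⟩ <;>
    simp_all [Perm.smul_def]

theorem card_filter_pi_perm_apply_eq [Fintype ι] [∀ m, Fintype (α m)] (hij : i ≠ j) (k : α i)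
    {ℓ ℓ' : α j} (hℓ : ℓ ≠ ℓ') (x : α i) {y y' : α j} (hy : y ≠ y') :
    #{σ : ∀ m, Perm (α m) | (σ i k, σ j ℓ, σ j ℓ') = (x, y, y')} =
      #{σ : ∀ m, Perm (α m) | (σ i k, σ j ℓ, σ j ℓ') = (k, ℓ, ℓ')} := by
  obtain ⟨τ, rfl, rfl, rfl⟩ := exists_pi_perm_apply_eq hij k x hℓ hy
  exact (card_equiv (Equiv.mulLeft τ) fun σ => by simp [Prod.ext_iff]).symm

end PiPerm

section Batches

variable {M b p : ℕ}

theorem card_filter_div_lt (hM : M = b * p) (hp : 0 < p) (c : ℕ) :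
    #{x : Fin M | (x : ℕ) / p < c} = min b c * p := by
  simp_rw [Nat.div_lt_iff_lt_mul hp, Fin.card_filter_val_lt, hM, min_mul_mul_right]

theorem card_filter_div_eq (hM : M = b * p) (hp : 0 < p) (u : ℕ) :
    #{x : Fin M | (x : ℕ) / p = u} = if u < b then p else 0 := by
  have hsplit : #{x : Fin M | (x : ℕ) / p < u + 1} =
      #{x : Fin M | (x : ℕ) / p = u} + #{x : Fin M | (x : ℕ) / p < u} := by
    rw [← card_union_of_disjoint (disjoint_filter.2 fun _ _ h => h.not_lt ∘ ?_)]
    · congr 1; ext; simp only [mem_filter, mem_univ, true_and, mem_union]; omega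
    · omega
  rw [card_filter_div_lt hM hp, card_filter_div_lt hM hp] at hsplit
  split_ifs with hu
  · rw [min_eq_right hu, min_eq_right hu.le] at hsplit; linarith
  · rw [min_eq_left (by omega), min_eq_left (by omega)] at hsplit; omega

theorem card_filter_div_eq_div_offDiag {bi pi bj pj Ni Nj : ℕ} (hNi : Ni = bi * pi)
    (hNj : Nj = bj * pj) (hpi : 0 < pi) (hpj : 0 < pj) :
    #{r ∈ (univ : Finset (Fin Ni)) ×ˢ (univ : Finset (Fin Nj)).offDiag |
        (r.1 : ℕ) / pi = (r.2.1 : ℕ) / pj ∧ (r.1 : ℕ) / pi = (r.2.2 : ℕ) / pj}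
      = min bi bj * pi * (pj * pj - pj) := by
  have hfiber (x : Fin Ni) :
      #{q ∈ (univ : Finset (Fin Nj)).offDiag |
          (x : ℕ) / pi = (q.1 : ℕ) / pj ∧ (x : ℕ) / pi = (q.2 : ℕ) / pj}
        = if (x : ℕ) / pi < bj then pj * pj - pj else 0 := by
    have hbatch : {q ∈ (univ : Finset (Fin Nj)).offDiag |
          (x : ℕ) / pi = (q.1 : ℕ) / pj ∧ (x : ℕ) / pi = (q.2 : ℕ) / pj}
        = ({y : Fin Nj | (y : ℕ) / pj = (x : ℕ) / pi} : Finset (Fin Nj)).offDiag := by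
      ext; simp only [mem_filter, mem_offDiag, mem_univ, true_and]; tauto
    rw [hbatch, offDiag_card, card_filter_div_eq hNj hpj]
    split_ifs <;> rfl
  rw [card_filter, sum_product]
  simp_rw [← card_filter, hfiber]
  rw [sum_ite, sum_const, sum_const_zero, smul_eq_mul, add_zero, card_filter_div_lt hNi hpi]

end Batches

theorem cross_species_two_particles_prob_general
    (n : ℕ) (b p N : Fin n → ℕ)
    (hN : ∀ m, N m = b m * p m)
    (i j : Fin n) (hij : i ≠ j) (k : Fin (N i)) (ℓ ℓ' : Fin (N j)) (hll' : ℓ ≠ ℓ') :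
    ((Finset.univ.filter (fun σ : ∀ m : Fin n, Equiv.Perm (Fin (N m)) =>
        (σ i k : ℕ) / p i = (σ j ℓ : ℕ) / p j ∧
        (σ i k : ℕ) / p i = (σ j ℓ' : ℕ) / p j)).card : ℝ) /
      (Fintype.card (∀ m : Fin n, Equiv.Perm (Fin (N m))) : ℝ)
    = ((min (b i) (b j) : ℝ) * ((p j : ℝ) - 1)) /
        ((b i : ℝ) * (b j : ℝ) * ((N j : ℝ) - 1)) := by
  have hpos {m : Fin n} (x : Fin (N m)) : 0 < b m ∧ 0 < p m :=
    CanonicallyOrderedAdd.mul_pos.1 (hN m ▸ x.pos)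
  obtain ⟨hbi, hpi⟩ := hpos k
  obtain ⟨hbj, hpj⟩ := hpos ℓ
  have hNj : 1 < N j := by simpa using Fintype.one_lt_card_iff.2 ⟨ℓ, ℓ', hll'⟩
  rw [card_filter_comp_div_card (f := fun σ : ∀ m, Perm (Fin (N m)) => (σ i k, σ j ℓ, σ j ℓ'))
      (t := univ ×ˢ univ.offDiag) (by simp [hll'])
      (fun ⟨x, y, y'⟩ hr => card_filter_pi_perm_apply_eq (α := fun m => Fin (N m)) hij k hll' x
        (by simpa using hr))
      (fun r => (r.1 : ℕ) / p i = (r.2.1 : ℕ) / p j ∧ (r.1 : ℕ) / p i = (r.2.2 : ℕ) / p j),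
    card_filter_div_eq_div_offDiag (hN i) (hN j) hpi hpj, card_product, offDiag_card,
    card_univ, card_univ, Fintype.card_fin, Fintype.card_fin]
  have hNiR : (N i : ℝ) = b i * p i := mod_cast hN i
  have hNjR : (N j : ℝ) = b j * p j := mod_cast hN j
  have hNj1 : (N j : ℝ) - 1 ≠ 0 := sub_ne_zero.2 (mod_cast hNj.ne')
  push_cast [Nat.cast_sub (Nat.le_mul_self _)]
  rw [hNiR]
  field_simp
  rw [hNjR]
  ring

/-- In the multi-species batch model, for two distinct species
`i ≠ j`, a particle `k` of species `i` and two distinct particles `ℓ ≠ ℓ'` of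
species `j`, the probability of the joint event that the batch index of `k`
coincides with those of `ℓ` and `ℓ'` equals
`min (b i) (b j) * (p j - 1) / (b i * b j * (N j - 1))`. -/
theorem cross_species_two_particles_prob
    (n : ℕ) (hn : 2 ≤ n) (b p N : Fin n → ℕ)
    (hb : ∀ m, 1 ≤ b m) (hp : ∀ m, 2 ≤ p m) (hN : ∀ m, N m = b m * p m)
    (i j : Fin n) (hij : i ≠ j) (k : Fin (N i)) (ℓ ℓ' : Fin (N j)) (hll' : ℓ ≠ ℓ') :
    ((Finset.univ.filter (fun σ : ∀ m : Fin n, Equiv.Perm (Fin (N m)) =>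
        (σ i k : ℕ) / p i = (σ j ℓ : ℕ) / p j ∧
        (σ i k : ℕ) / p i = (σ j ℓ' : ℕ) / p j)).card : ℝ) /
      (Fintype.card (∀ m : Fin n, Equiv.Perm (Fin (N m))) : ℝ)
    = ((min (b i) (b j) : ℝ) * ((p j : ℝ) - 1)) /
        ((b i : ℝ) * (b j : ℝ) * ((N j : ℝ) - 1)) :=
  cross_species_two_particles_prob_general n b p N hN i j hij k ℓ ℓ' hll'
end

section
/- In the multi-species batch model, for two distinct species i ≠ j, a particle ℓ of species j, and two distinct particles k ≠ ℓ' of species i, the probability of the joint event a_i(k) = a_j(ℓ) and a_i(k) = a_i(ℓ') equals min{b_i, b_j}(p_i − 1)/(b_i · b_j · (N_i − 1)). -/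
/-!
The event only involves the triple `(σ i k, σ i ℓ', σ j ℓ)`. Left multiplication by a permutation
supported on species `i` and `j` carries any triple with distinct first two entries to any other,
so all such triples are equally likely, and the probability is the proportion of them lying in a
common batch: `min (b i) (b j) * p i * ((p i - 1) * p j)` out of `N i * (N i - 1) * N j`.
-/

open Finset

section Fibers

variable {X Y : Type*} [Fintype X] [DecidableEq Y]

lemma card_filter_comp_eq_mul_of_card_fiber (f : X → Y) {s : Finset Y} (hs : ∀ x, f x ∈ s)
    {c : ℕ} (hc : ∀ y ∈ s, #{x | f x = y} = c) (P : Y → Prop) [DecidablePred P] :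
    #{x | P (f x)} = #{y ∈ s | P y} * c := by
  rw [card_eq_sum_card_fiberwise (f := f) (t := {y ∈ s | P y}) fun x hx => by simp_all,
    ← smul_eq_mul, ← sum_const]
  refine sum_congr rfl fun y hy => ?_
  rw [filter_filter, ← hc y (mem_filter.1 hy).1]
  congr 1
  ext x
  simp only [mem_filter, mem_univ, true_and, and_iff_right_iff_imp]
  rintro rfl
  exact (mem_filter.1 hy).2

lemma card_filter_comp_div_card_s6 {K : Type*} [Semifield K] [CharZero K] [Nonempty X] (f : X → Y)
    {s : Finset Y} (hs : ∀ x, f x ∈ s) (hfib : ∀ y ∈ s, ∀ y' ∈ s, #{x | f x = y} = #{x | f x = y'})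
    (P : Y → Prop) [DecidablePred P] :
    (#{x | P (f x)} : K) / Fintype.card X = #{y ∈ s | P y} / #s := by
  obtain ⟨x₀⟩ := ‹Nonempty X›
  have hc : ∀ y ∈ s, #{x | f x = y} = #{x | f x = f x₀} := fun y hy => hfib y hy _ (hs x₀)
  have hpos : 0 < #{x | f x = f x₀} := card_pos.2 ⟨x₀, by simp⟩
  have hX : Fintype.card X = #s * #{x | f x = f x₀} := by
    simpa using card_filter_comp_eq_mul_of_card_fiber f hs hc fun _ => True
  rw [card_filter_comp_eq_mul_of_card_fiber f hs hc, hX, Nat.cast_mul, Nat.cast_mul]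
  exact mul_div_mul_right _ _ (Nat.cast_ne_zero.2 hpos.ne')

end Fibers

section Perm

variable {ι : Type*} [DecidableEq ι] [Fintype ι] {β : ι → Type*} [∀ m, Fintype (β m)]
  [∀ m, DecidableEq (β m)]

lemma card_fiber_perm_apply_triple_eq {i j : ι} (hij : i ≠ j) (k ℓ' : β i) (ℓ : β j)
    {t t' : β i × β i × β j} (ht : t.1 ≠ t.2.1) (ht' : t'.1 ≠ t'.2.1) :
    #{σ : ∀ m, Equiv.Perm (β m) | (σ i k, σ i ℓ', σ j ℓ) = t}
      = #{σ : ∀ m, Equiv.Perm (β m) | (σ i k, σ i ℓ', σ j ℓ) = t'} := by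
  obtain ⟨x, y, z⟩ := t
  obtain ⟨x', y', z'⟩ := t'
  obtain ⟨g, rfl, rfl⟩ := MulAction.is_two_pretransitive_iff.1
    (Equiv.Perm.isMultiplyPretransitive (β i) 2) ht ht'
  obtain ⟨h, rfl⟩ := MulAction.exists_smul_eq (Equiv.Perm (β j)) z z'
  refine card_equiv (Equiv.mulLeft (Pi.mulSingle i g * Pi.mulSingle j h)) fun σ => ?_
  simp [Pi.mulSingle_eq_of_ne hij, Pi.mulSingle_eq_of_ne hij.symm, Equiv.Perm.smul_def]

end Perm

lemma card_filter_prod_prod {α β γ : Type*} [Fintype α] [Fintype β] [Fintype γ]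
    (P : α → β → Prop) (Q : α → γ → Prop) [∀ x, DecidablePred (P x)] [∀ x, DecidablePred (Q x)] :
    #{t : α × β × γ | P t.1 t.2.1 ∧ Q t.1 t.2.2} = ∑ x, #{y | P x y} * #{z | Q x z} := by
  simp only [card_filter, Fintype.sum_prod_type, sum_mul_sum, ite_zero_mul_ite_zero, mul_one]

namespace Fin

lemma card_filter_div_lt {b p : ℕ} (hp : 0 < p) (c : ℕ) :
    #{x : Fin (b * p) | (x : ℕ) / p < c} = min b c * p := by
  simp only [Nat.div_lt_iff_lt_mul hp, card_filter_val_lt]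
  exact (min_mul_of_nonneg b c p.zero_le).symm

lemma card_filter_div_eq_s6 {b p : ℕ} (hp : 0 < p) (q : ℕ) :
    #{x : Fin (b * p) | (x : ℕ) / p = q} = if q < b then p else 0 := by
  have : univ.filter (fun x : Fin (b * p) => (x : ℕ) / p = q)
      = univ.filter (fun x : Fin (b * p) => (x : ℕ) / p < q + 1) \
        univ.filter (fun x : Fin (b * p) => (x : ℕ) / p < q) := by
    ext x
    simp only [mem_sdiff, mem_filter, mem_univ, true_and]
    omega
  rw [this, card_sdiff_of_subset (monotone_filter_right _ fun x hx => by omega),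
    card_filter_div_lt hp, card_filter_div_lt hp]
  split_ifs with hq
  · rw [min_eq_right hq, min_eq_right hq.le, add_one_mul, Nat.add_sub_cancel_left]
  · rw [min_eq_left (by omega), min_eq_left (not_lt.1 hq), Nat.sub_self]

lemma card_filter_ne_and_div_eq_div {b p : ℕ} (hp : 0 < p) (x : Fin (b * p)) :
    #{y : Fin (b * p) | x ≠ y ∧ (x : ℕ) / p = (y : ℕ) / p} = p - 1 := by
  have hx : (x : ℕ) / p < b := (Nat.div_lt_iff_lt_mul hp).2 x.2
  have : univ.filter (fun y : Fin (b * p) => x ≠ y ∧ (x : ℕ) / p = (y : ℕ) / p)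
      = (univ.filter fun y : Fin (b * p) => (y : ℕ) / p = (x : ℕ) / p).erase x := by
    ext y
    simp only [mem_erase, mem_filter, mem_univ, true_and]
    constructor <;> exact fun h => ⟨h.1.symm, h.2.symm⟩
  rw [this, card_erase_of_mem (by simp), card_filter_div_eq_s6 hp, if_pos hx]

end Fin

lemma card_filter_fst_ne {α γ : Type*} [Fintype α] [DecidableEq α] [Fintype γ] :
    #{t : α × α × γ | t.1 ≠ t.2.1} = Fintype.card α * (Fintype.card α - 1) * Fintype.card γ := by
  calc #{t : α × α × γ | t.1 ≠ t.2.1}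
      = #{t : α × α × γ | t.1 ≠ t.2.1 ∧ True} := by simp only [and_true]
    _ = ∑ x : α, (Fintype.card α - 1) * Fintype.card γ := by
      rw [card_filter_prod_prod (fun x y : α => x ≠ y) fun _ (_ : γ) => True]
      refine sum_congr rfl fun x _ => ?_
      rw [filter_ne, card_erase_of_mem (mem_univ x), filter_true, card_univ, card_univ]
    _ = _ := by rw [sum_const, smul_eq_mul, card_univ, mul_assoc]

lemma card_filter_same_batch_triple {N M b b' p p' : ℕ} (hN : N = b * p) (hM : M = b' * p')
    (hp : 0 < p) (hp' : 0 < p') :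
    #{t ∈ univ.filter (fun t : Fin N × Fin N × Fin M => t.1 ≠ t.2.1) |
        (t.1 : ℕ) / p = (t.2.2 : ℕ) / p' ∧ (t.1 : ℕ) / p = (t.2.1 : ℕ) / p}
      = min b b' * p * ((p - 1) * p') := by
  subst hN hM
  rw [filter_filter]
  calc #{t : Fin (b * p) × Fin (b * p) × Fin (b' * p') | t.1 ≠ t.2.1 ∧
          ((t.1 : ℕ) / p = (t.2.2 : ℕ) / p' ∧ (t.1 : ℕ) / p = (t.2.1 : ℕ) / p)}
      = #{t : Fin (b * p) × Fin (b * p) × Fin (b' * p') | (t.1 ≠ t.2.1 ∧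
          (t.1 : ℕ) / p = (t.2.1 : ℕ) / p) ∧ (t.1 : ℕ) / p = (t.2.2 : ℕ) / p'} :=
        congrArg card (filter_congr fun t _ => by tauto)
    _ = ∑ x : Fin (b * p), if (x : ℕ) / p < b' then (p - 1) * p' else 0 := by
      rw [card_filter_prod_prod (fun x y : Fin (b * p) => x ≠ y ∧ (x : ℕ) / p = (y : ℕ) / p)
        fun x (z : Fin (b' * p')) => (x : ℕ) / p = (z : ℕ) / p']
      refine sum_congr rfl fun x _ => ?_
      rw [Fin.card_filter_ne_and_div_eq_div hp]
      simp only [eq_comm (a := (x : ℕ) / p), Fin.card_filter_div_eq_s6 hp', mul_ite, mul_zero]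
    _ = min b b' * p * ((p - 1) * p') := by
      rw [← sum_filter, sum_const, smul_eq_mul, Fin.card_filter_div_lt hp]

theorem mixed_species_two_particles_prob_general
    (n : ℕ) (b p N : Fin n → ℕ)
    (hp : ∀ m, 2 ≤ p m) (hN : ∀ m, N m = b m * p m)
    (i j : Fin n) (hij : i ≠ j) (ℓ : Fin (N j)) (k ℓ' : Fin (N i)) (hkl' : k ≠ ℓ') :
    ((Finset.univ.filter (fun σ : ∀ m : Fin n, Equiv.Perm (Fin (N m)) =>
        (σ i k : ℕ) / p i = (σ j ℓ : ℕ) / p j ∧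
        (σ i k : ℕ) / p i = (σ i ℓ' : ℕ) / p i)).card : ℝ) /
      (Fintype.card (∀ m : Fin n, Equiv.Perm (Fin (N m))) : ℝ)
    = ((min (b i) (b j) : ℝ) * ((p i : ℝ) - 1)) /
        ((b i : ℝ) * (b j : ℝ) * ((N i : ℝ) - 1)) := by
  have hpi : 0 < p i := zero_lt_two.trans_le (hp i)
  have hpj : 0 < p j := zero_lt_two.trans_le (hp j)
  rw [card_filter_comp_div_card_s6 (fun σ : ∀ m, Equiv.Perm (Fin (N m)) => (σ i k, σ i ℓ', σ j ℓ))
      (s := univ.filter fun t => t.1 ≠ t.2.1)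
      (fun σ => mem_filter.2 ⟨mem_univ _, (σ i).injective.ne hkl'⟩)
      (fun t ht t' ht' => card_fiber_perm_apply_triple_eq (β := fun m => Fin (N m)) hij k ℓ' ℓ
        (mem_filter.1 ht).2 (mem_filter.1 ht').2)
      (fun t => (t.1 : ℕ) / p i = (t.2.2 : ℕ) / p j ∧ (t.1 : ℕ) / p i = (t.2.1 : ℕ) / p i),
    card_filter_same_batch_triple (hN i) (hN j) hpi hpj, card_filter_fst_ne]
  push_cast [Fintype.card_fin, Nat.cast_pred hpi, Nat.cast_pred k.pos]
  push_cast [hN i, hN j]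
  have hpp : (p i : ℝ) * p j ≠ 0 := by positivity
  rw [eq_comm, ← mul_div_mul_right _ _ hpp]
  congr 1 <;> ring

/-- In the multi-species batch model, for two distinct species
`i ≠ j`, a particle `ℓ` of species `j` and two distinct particles `k ≠ ℓ'` of
species `i`, the probability of the joint event that the batch index of `k`
coincides with that of `ℓ` (species `j`) and with that of `ℓ'` (species `i`)
equals `min (b i) (b j) * (p i - 1) / (b i * b j * (N i - 1))`. -/
theorem mixed_species_two_particles_prob
    (n : ℕ) (hn : 2 ≤ n) (b p N : Fin n → ℕ)
    (hb : ∀ m, 1 ≤ b m) (hp : ∀ m, 2 ≤ p m) (hN : ∀ m, N m = b m * p m)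
    (i j : Fin n) (hij : i ≠ j) (ℓ : Fin (N j)) (k ℓ' : Fin (N i)) (hkl' : k ≠ ℓ') :
    ((Finset.univ.filter (fun σ : ∀ m : Fin n, Equiv.Perm (Fin (N m)) =>
        (σ i k : ℕ) / p i = (σ j ℓ : ℕ) / p j ∧
        (σ i k : ℕ) / p i = (σ i ℓ' : ℕ) / p i)).card : ℝ) /
      (Fintype.card (∀ m : Fin n, Equiv.Perm (Fin (N m))) : ℝ)
    = ((min (b i) (b j) : ℝ) * ((p i : ℝ) - 1)) /
        ((b i : ℝ) * (b j : ℝ) * ((N i : ℝ) - 1)) :=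
  mixed_species_two_particles_prob_general n b p N hp hN i j hij ℓ k ℓ' hkl'
end

section
/- (Single-species case of Proposition 2.1.) In the batch model with one species (n = 1, b batches of size p, N = b·p, N ≥ 3), for every particle k, the variance of the random-batch remainder satisfies Var(χ^k(x)) = (1/(p−1) − 1/(N−1)) · A(x), where A(x) = (1/(N−2)) Σ_{ℓ≠k} |K(x^k−x^ℓ) − (1/(N−1)) Σ_{ℓ'≠k} K(x^k−x^{ℓ'})|². -/
/-!
Given `k`'s batch, its other `p - 1` members form a random subset of the `N - 1` remaining
particles whose law is invariant under every transposition of two of them (replace `σ` by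
`σ * swap c c'`). For such an exchangeable random `r`-subset of an `n`-set, the number of samples
containing a given element, resp. a given pair of distinct elements, is the same for all elements,
resp. pairs, and double counting fixes these frequencies to `r / n` and `r (r - 1) / (n (n - 1))`.
Expanding the squared norm of the centred sample sum then gives the variance of the sample mean
without replacement, `(1/r - 1/n) / (n - 1) · ∑ ‖f a - mean‖²`, here with `r = p - 1`, `n = N - 1`.
-/

open Finset

section Mean

variable {ι 𝕜 V : Type*} [Field 𝕜] [CharZero 𝕜] [AddCommGroup V] [Module 𝕜 V]

theorem sum_sub_inv_card_smul_sum (s : Finset ι) (f : ι → V) :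
    ∑ a ∈ s, (f a - (#s : 𝕜)⁻¹ • ∑ b ∈ s, f b) = 0 := by
  rcases s.eq_empty_or_nonempty with rfl | hs
  · exact sum_empty
  rw [sum_sub_distrib, sum_const, ← Nat.cast_smul_eq_nsmul 𝕜, smul_smul,
    mul_inv_cancel₀ (Nat.cast_ne_zero.2 hs.card_pos.ne'), one_smul, sub_self]

theorem inv_card_smul_sum_sub {s : Finset ι} (hs : s.Nonempty) (f : ι → V) (m : V) :
    (#s : 𝕜)⁻¹ • ∑ a ∈ s, f a - m = (#s : 𝕜)⁻¹ • ∑ a ∈ s, (f a - m) := by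
  rw [sum_sub_distrib, smul_sub, sum_const, ← Nat.cast_smul_eq_nsmul 𝕜, smul_smul,
    inv_mul_cancel₀ (Nat.cast_ne_zero.2 hs.card_pos.ne'), one_smul]

end Mean

theorem sum_sum_mul_eq_of_diag_offDiag {ι R : Type*} [CommRing R] {T : Finset ι}
    {C : ι → ι → R} {α β : R} (hdiag : ∀ a ∈ T, C a a = α)
    (hoff : ∀ a ∈ T, ∀ c ∈ T, a ≠ c → C a c = β) (f : ι → ι → R) :
    ∑ a ∈ T, ∑ c ∈ T, C a c * f a c
      = β * ∑ a ∈ T, ∑ c ∈ T, f a c + (α - β) * ∑ a ∈ T, f a a := by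
  classical
  have hC : ∀ a ∈ T, ∀ c ∈ T, C a c = β + (α - β) * if a = c then 1 else 0 := by
    intro a ha c hc
    split_ifs with h
    · subst h; rw [hdiag a ha]; ring
    · rw [hoff a ha c hc h]; ring
  calc ∑ a ∈ T, ∑ c ∈ T, C a c * f a c
      = ∑ a ∈ T, (β * ∑ c ∈ T, f a c + (α - β) * ∑ c ∈ T, if a = c then f a c else 0) := by
        refine sum_congr rfl fun a ha => ?_
        rw [mul_sum, mul_sum, ← sum_add_distrib]
        refine sum_congr rfl fun c hc => ?_
        rw [hC a ha c hc]
        split_ifs <;> ring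
    _ = _ := by
        rw [sum_add_distrib, ← mul_sum, ← mul_sum]
        congr 2
        exact sum_congr rfl fun a ha => by rw [sum_ite_eq, if_pos ha]

section Exchangeable

variable {ι Ω : Type*} [DecidableEq ι] [Fintype Ω]

/-- The random subset `S` of `T`, sampled uniformly from the finite space `Ω`, has a law invariant
under transpositions of `T`: each one is realised by a relabelling of `Ω`. -/
def ExchangeableOn (T : Finset ι) (S : Ω → Finset ι) : Prop :=
  ∀ c ∈ T, ∀ c' ∈ T, ∃ e : Ω ≃ Ω, ∀ ω, S (e ω) = (S ω).map (Equiv.swap c c').toEmbedding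

variable {T : Finset ι} {S : Ω → Finset ι}

theorem sum_sum_sum_eq_sum_sum_card_mul (hST : ∀ ω, S ω ⊆ T) (f : ι → ι → ℝ) :
    ∑ ω, ∑ a ∈ S ω, ∑ c ∈ S ω, f a c
      = ∑ a ∈ T, ∑ c ∈ T, (#{ω | a ∈ S ω ∧ c ∈ S ω} : ℝ) * f a c := by
  calc ∑ ω, ∑ a ∈ S ω, ∑ c ∈ S ω, f a c
      = ∑ ω, ∑ a ∈ T, ∑ c ∈ T, if a ∈ S ω ∧ c ∈ S ω then f a c else 0 := by
        refine sum_congr rfl fun ω _ => ?_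
        simp only [ite_and, sum_ite_irrel, sum_const_zero, sum_ite_mem, inter_eq_right.2 (hST ω)]
    _ = ∑ a ∈ T, ∑ c ∈ T, ∑ ω, if a ∈ S ω ∧ c ∈ S ω then f a c else 0 := by
        rw [sum_comm]
        exact sum_congr rfl fun a _ => sum_comm
    _ = _ := by
        simp only [← sum_filter, sum_const, nsmul_eq_mul]

theorem ExchangeableOn.card_mem_swap (hS : ExchangeableOn T S) {c c' : ι} (hc : c ∈ T)
    (hc' : c' ∈ T) (a a' : ι) :
    #{ω | Equiv.swap c c' a ∈ S ω ∧ Equiv.swap c c' a' ∈ S ω} = #{ω | a ∈ S ω ∧ a' ∈ S ω} := by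
  obtain ⟨e, he⟩ := hS c hc c' hc'
  refine card_equiv e fun ω => ?_
  simp only [mem_filter, mem_univ, true_and, he, mem_map_equiv, Equiv.symm_swap]

theorem ExchangeableOn.card_mem_diag (hS : ExchangeableOn T S) {a a' : ι} (ha : a ∈ T)
    (ha' : a' ∈ T) :
    #{ω | a ∈ S ω ∧ a ∈ S ω} = #{ω | a' ∈ S ω ∧ a' ∈ S ω} := by
  simpa only [Equiv.swap_apply_left] using (hS.card_mem_swap ha ha' a a).symm

theorem ExchangeableOn.card_mem_offDiag (hS : ExchangeableOn T S) {a c a' c' : ι}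
    (ha : a ∈ T) (hc : c ∈ T) (ha' : a' ∈ T) (hc' : c' ∈ T) (hac : a ≠ c) (hac' : a' ≠ c') :
    #{ω | a ∈ S ω ∧ c ∈ S ω} = #{ω | a' ∈ S ω ∧ c' ∈ S ω} := by
  set c₁ := Equiv.swap a a' c
  have hc₁ : c₁ ∈ T := by
    unfold c₁; rw [Equiv.swap_apply_def]; split_ifs <;> assumption
  have hac₁ : a' ≠ c₁ := fun h =>
    hac ((Equiv.swap_apply_eq_iff.mp h.symm).trans (Equiv.swap_apply_right a a')).symm
  calc #{ω | a ∈ S ω ∧ c ∈ S ω} = #{ω | a' ∈ S ω ∧ c₁ ∈ S ω} := by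
        simpa only [Equiv.swap_apply_left] using (hS.card_mem_swap ha ha' a c).symm
    _ = #{ω | a' ∈ S ω ∧ c' ∈ S ω} := by
        simpa only [Equiv.swap_apply_of_ne_of_ne hac₁ hac', Equiv.swap_apply_left]
          using (hS.card_mem_swap hc₁ hc' a' c₁).symm

variable {V : Type*} [NormedAddCommGroup V] [InnerProductSpace ℝ V]

theorem ExchangeableOn.sum_norm_sq_sum (hS : ExchangeableOn T S) (hST : ∀ ω, S ω ⊆ T)
    {r : ℕ} (hcard : ∀ ω, #(S ω) = r) (hT : 2 ≤ #T) {w : ι → V} (hw : ∑ a ∈ T, w a = 0) :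
    ∑ ω, ‖∑ a ∈ S ω, w a‖ ^ 2
      = Fintype.card Ω * r * (#T - r) / (#T * (#T - 1)) * ∑ a ∈ T, ‖w a‖ ^ 2 := by
  obtain ⟨a₀, ha₀, a₁, ha₁, h01⟩ := one_lt_card.mp hT
  obtain ⟨α, β, hpair⟩ : ∃ α β : ℝ, ∀ f : ι → ι → ℝ, ∑ ω, ∑ a ∈ S ω, ∑ c ∈ S ω, f a c
      = β * ∑ a ∈ T, ∑ c ∈ T, f a c + (α - β) * ∑ a ∈ T, f a a :=
    ⟨_, _, fun f => (sum_sum_sum_eq_sum_sum_card_mul hST f).trans <|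
      sum_sum_mul_eq_of_diag_offDiag (C := fun a c => (#{ω | a ∈ S ω ∧ c ∈ S ω} : ℝ))
        (fun a ha => congrArg Nat.cast (hS.card_mem_diag ha ha₀))
        (fun a ha c hc hac => congrArg Nat.cast (hS.card_mem_offDiag ha hc ha₀ ha₁ hac h01)) f⟩
  -- testing against `f = 1` and `f = δ` determines `α - β`
  have hsq := hpair fun _ _ => 1
  have hdiag := hpair fun a c => if a = c then 1 else 0
  simp only [sum_ite_eq, sum_ite_mem, inter_self, sum_const, hcard, card_univ, nsmul_eq_mul,
    mul_one, if_true] at hsq hdiag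
  have hn : (2 : ℝ) ≤ #T := by exact_mod_cast hT
  have hαβ : α - β = Fintype.card Ω * r * (#T - r) / (#T * (#T - 1)) := by
    rw [eq_div_iff (by nlinarith)]
    linear_combination hsq - (#T : ℝ) * hdiag
  have hnorm := hpair fun a c => inner ℝ (w a) (w c)
  simp only [← inner_sum, ← sum_inner, real_inner_self_eq_norm_sq, hw, norm_zero] at hnorm
  rw [hnorm, ← hαβ]
  ring

theorem ExchangeableOn.sum_norm_sq_sampleMean_sub_mean (hS : ExchangeableOn T S)
    (hST : ∀ ω, S ω ⊆ T) {r : ℕ} (hr : 0 < r) (hcard : ∀ ω, #(S ω) = r) (hT : 2 ≤ #T)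
    (f : ι → V) :
    ∑ ω, ‖(r : ℝ)⁻¹ • ∑ a ∈ S ω, f a - (#T : ℝ)⁻¹ • ∑ b ∈ T, f b‖ ^ 2
      = Fintype.card Ω * ((r : ℝ)⁻¹ - (#T : ℝ)⁻¹) * ((#T : ℝ) - 1)⁻¹
        * ∑ a ∈ T, ‖f a - (#T : ℝ)⁻¹ • ∑ b ∈ T, f b‖ ^ 2 := by
  have hcentre (ω) (m : V) : ‖(r : ℝ)⁻¹ • ∑ a ∈ S ω, f a - m‖ ^ 2
      = ((r : ℝ)⁻¹) ^ 2 * ‖∑ a ∈ S ω, (f a - m)‖ ^ 2 := by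
    rw [← hcard ω, inv_card_smul_sum_sub (card_pos.1 (hcard ω ▸ hr)), norm_smul, mul_pow,
      norm_inv, Real.norm_natCast]
  rw [sum_congr rfl fun ω _ => hcentre ω _, ← mul_sum,
    hS.sum_norm_sq_sum hST hcard hT (sum_sub_inv_card_smul_sum T f)]
  have hr' : (r : ℝ) ≠ 0 := by positivity
  have hT' : (#T : ℝ) - 1 ≠ 0 := by
    have : (2 : ℝ) ≤ #T := by exact_mod_cast hT
    linarith
  field_simp

end Exchangeable

theorem Fin.card_filter_div_eq_s10 {N p c : ℕ} (hp : 0 < p) (hc : (c + 1) * p ≤ N) :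
    #{v : Fin N | (v : ℕ) / p = c} = p := by
  rw [Nat.succ_mul] at hc
  have hvals : ({v : Fin N | (v : ℕ) / p = c} : Finset (Fin N)).map Fin.valEmbedding =
      Ico (c * p) (c * p + p) := by
    ext a
    simp only [mem_map, mem_filter, mem_univ, true_and, Fin.valEmbedding_apply, mem_Ico,
      Nat.div_eq_iff hp]
    constructor
    · rintro ⟨v, hv, rfl⟩; omega
    · intro ha; exact ⟨⟨a, by omega⟩, by simp only; omega, rfl⟩
  rw [← card_map, hvals, Nat.card_Ico, Nat.add_sub_cancel_left]

def batchmates {N : ℕ} (p : ℕ) (σ : Equiv.Perm (Fin N)) (k : Fin N) : Finset (Fin N) :=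
  {ℓ | ℓ ≠ k ∧ (σ ℓ : ℕ) / p = (σ k : ℕ) / p}

theorem card_batchmates {N p : ℕ} (hp : 0 < p) (hpN : p ∣ N) (σ : Equiv.Perm (Fin N))
    (k : Fin N) : #(batchmates p σ k) = p - 1 := by
  have hbatch : batchmates p σ k = Finset.erase {ℓ | (σ ℓ : ℕ) / p = (σ k : ℕ) / p} k := by
    ext ℓ
    simp only [batchmates, mem_filter, mem_univ, true_and, mem_erase]
  rw [hbatch, card_erase_of_mem (by simp),
    card_equiv σ (t := ({v | (v : ℕ) / p = (σ k : ℕ) / p} : Finset (Fin N))) (by simp)]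
  refine congrArg (· - 1) (Fin.card_filter_div_eq_s10 hp ?_)
  obtain ⟨b, hb⟩ := hpN
  have hlt : (σ k : ℕ) / p < b :=
    (Nat.div_lt_iff_lt_mul hp).2 (by rw [mul_comm, ← hb]; exact (σ k).isLt)
  calc _ ≤ b * p := Nat.mul_le_mul_right p hlt
    _ = N := by rw [hb, mul_comm]

theorem exchangeableOn_batchmates {N : ℕ} (p : ℕ) (k : Fin N) :
    ExchangeableOn {ℓ | ℓ ≠ k} (batchmates p · k) := by
  intro c hc c' hc'
  simp only [mem_filter, mem_univ, true_and] at hc hc'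
  refine ⟨Equiv.mulRight (Equiv.swap c c'), fun σ => ?_⟩
  ext ℓ
  simp only [batchmates, mem_filter, mem_univ, true_and, mem_map_equiv, Equiv.symm_swap,
    Equiv.coe_mulRight, Equiv.Perm.mul_apply, ne_eq, Equiv.swap_apply_eq_iff,
    Equiv.swap_apply_of_ne_of_ne hc.symm hc'.symm]

theorem single_species_variance_general
    (b p : ℕ) (hp : 2 ≤ p) (N : ℕ) (hN : N = b * p) (hN3 : 3 ≤ N)
    (d : ℕ) (x : Fin N → EuclideanSpace ℝ (Fin d))
    (K : EuclideanSpace ℝ (Fin d) → EuclideanSpace ℝ (Fin d)) (k : Fin N) :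
    (Fintype.card (Equiv.Perm (Fin N)) : ℝ)⁻¹ *
      ∑ σ : Equiv.Perm (Fin N),
        ‖((p : ℝ) - 1)⁻¹ •
            (∑ ℓ ∈ Finset.univ.filter (fun ℓ : Fin N =>
                ℓ ≠ k ∧ (σ ℓ : ℕ) / p = (σ k : ℕ) / p), K (x k - x ℓ))
          - ((N : ℝ) - 1)⁻¹ •
              (∑ ℓ ∈ Finset.univ.filter (fun ℓ : Fin N => ℓ ≠ k), K (x k - x ℓ))‖ ^ 2
    = (1 / ((p : ℝ) - 1) - 1 / ((N : ℝ) - 1)) *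
        (((N : ℝ) - 2)⁻¹ *
          ∑ ℓ ∈ Finset.univ.filter (fun ℓ : Fin N => ℓ ≠ k),
            ‖K (x k - x ℓ)
              - ((N : ℝ) - 1)⁻¹ •
                  ∑ ℓ' ∈ Finset.univ.filter (fun ℓ' : Fin N => ℓ' ≠ k),
                    K (x k - x ℓ')‖ ^ 2) := by
  have hTcard : #{ℓ : Fin N | ℓ ≠ k} = N - 1 := by simp [filter_ne']
  have hT : (#{ℓ : Fin N | ℓ ≠ k} : ℝ) = N - 1 := by
    rw [hTcard, Nat.cast_sub (by omega), Nat.cast_one]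
  have hr : ((p - 1 : ℕ) : ℝ) = p - 1 := by rw [Nat.cast_sub (by omega), Nat.cast_one]
  have hvar := (exchangeableOn_batchmates p k).sum_norm_sq_sampleMean_sub_mean
    (fun σ => monotone_filter_right _ fun _ _ => And.left) (by omega)
    (card_batchmates (by omega) ⟨b, hN.trans (mul_comm b p)⟩ · k) (by omega)
    fun ℓ => K (x k - x ℓ)
  rw [hr, hT] at hvar
  change (Fintype.card (Equiv.Perm (Fin N)) : ℝ)⁻¹ * ∑ σ, ‖((p : ℝ) - 1)⁻¹ • ∑ ℓ ∈ batchmates p σ k,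
    K (x k - x ℓ) - ((N : ℝ) - 1)⁻¹ • ∑ ℓ with ℓ ≠ k, K (x k - x ℓ)‖ ^ 2 = _
  rw [hvar]
  field_simp
  ring

/-- **Single-species case of Proposition 2.1.** In the batch model
with one species (`b` batches of size `p`, `N = b * p ≥ 3`), for every particle
`k`, the variance of the random-batch remainder
`χ^k(σ) = (1/(p-1)) Σ_{ℓ ≠ k, same batch} K(x k - x ℓ) - (1/(N-1)) Σ_{ℓ ≠ k} K(x k - x ℓ)`
equals `(1/(p-1) - 1/(N-1)) · A(x)` with
`A(x) = (1/(N-2)) Σ_{ℓ ≠ k} |K(x k - x ℓ) - (1/(N-1)) Σ_{ℓ' ≠ k} K(x k - x ℓ')|²`. -/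
theorem single_species_variance
    (b p : ℕ) (hb : 1 ≤ b) (hp : 2 ≤ p) (N : ℕ) (hN : N = b * p) (hN3 : 3 ≤ N)
    (d : ℕ) (x : Fin N → EuclideanSpace ℝ (Fin d))
    (K : EuclideanSpace ℝ (Fin d) → EuclideanSpace ℝ (Fin d)) (k : Fin N) :
    (Fintype.card (Equiv.Perm (Fin N)) : ℝ)⁻¹ *
      ∑ σ : Equiv.Perm (Fin N),
        ‖((p : ℝ) - 1)⁻¹ •
            (∑ ℓ ∈ Finset.univ.filter (fun ℓ : Fin N =>
                ℓ ≠ k ∧ (σ ℓ : ℕ) / p = (σ k : ℕ) / p), K (x k - x ℓ))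
          - ((N : ℝ) - 1)⁻¹ •
              (∑ ℓ ∈ Finset.univ.filter (fun ℓ : Fin N => ℓ ≠ k), K (x k - x ℓ))‖ ^ 2
    = (1 / ((p : ℝ) - 1) - 1 / ((N : ℝ) - 1)) *
        (((N : ℝ) - 2)⁻¹ *
          ∑ ℓ ∈ Finset.univ.filter (fun ℓ : Fin N => ℓ ≠ k),
            ‖K (x k - x ℓ)
              - ((N : ℝ) - 1)⁻¹ •
                  ∑ ℓ' ∈ Finset.univ.filter (fun ℓ' : Fin N => ℓ' ≠ k),
                    K (x k - x ℓ')‖ ^ 2) :=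
  single_species_variance_general b p hp N hN hN3 d x K k
end

section
/- (Lemma 2.2, cross-species case.) In the two-species batch model (species i and j, i ≠ j), let S^1, …, S^{N_j} : Ω → ℝ^d be square-integrable random variables such that the σ-algebra generated by (S^1, …, S^{N_j}) is independent of the σ-algebra generated by the batch permutations (σ_i, σ_j). Then for every particle k of species i, the L²(Ω) norm of (1/p_j) Σ_{ℓ: a_j(ℓ) = a_i(k)} S^ℓ is at most max_{ℓ=1,…,N_j} ‖S^ℓ‖_{L²(Ω)}. -/
/-!
For frozen permutations the batch average is `p_j⁻¹` times a sum of at most `p_j` of the `S^ℓ`,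
so Minkowski's inequality bounds its `L²` norm by `max_ℓ ‖S^ℓ‖`. Independence makes the joint law
of `(S, σ)` a product measure, so by Tonelli the mean square of the random batch average is the
average, over the law of `σ`, of the mean squares for frozen permutations.
-/

open MeasureTheory ProbabilityTheory
open scoped ENNReal

instance permMeasurableSpace (α : Type*) : MeasurableSpace (Equiv.Perm α) := ⊤

open Finset Function

instance Equiv.Perm.instDiscreteMeasurableSpace (α : Type*) :
    DiscreteMeasurableSpace (Equiv.Perm α) :=
  ⟨fun _ => MeasurableSpace.measurableSet_top⟩

theorem Finset.card_filter_div_eq_le {ι : Type*} [Fintype ι] {f : ι → ℕ} (hf : Injective f)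
    {p : ℕ} (hp : 0 < p) (a : ℕ) : #{i | f i / p = a} ≤ p := by
  have hmaps : Set.MapsTo f ↑({i | f i / p = a} : Finset ι) ↑(Ico (a * p) (a * p + p)) := by
    intro i hi
    simp only [coe_filter, mem_univ, true_and, Set.mem_ofPred_eq] at hi
    subst hi
    simpa using ⟨Nat.div_mul_le_self _ _, Nat.lt_div_mul_add hp⟩
  simpa using card_le_card_of_injOn f hmaps hf.injOn

def batch {N : ℕ} (σ : Equiv.Perm (Fin N)) (p a : ℕ) : Finset (Fin N) :=
  {ℓ | (σ ℓ : ℕ) / p = a}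

theorem card_batch_le {N : ℕ} (σ : Equiv.Perm (Fin N)) {p : ℕ} (hp : 0 < p) (a : ℕ) :
    #(batch σ p a) ≤ p :=
  card_filter_div_eq_le (Fin.val_injective.comp σ.injective) hp a

section

variable {Ω : Type*} [MeasurableSpace Ω] {μ : Measure Ω}

theorem lintegral_comp_indepFun_le [IsProbabilityMeasure μ] {α β : Type*} [MeasurableSpace α]
    [MeasurableSpace β] {X : Ω → α} {Y : Ω → β} (hX : AEMeasurable X μ) (hY : AEMeasurable Y μ)
    (hXY : IndepFun X Y μ) {g : α → β → ℝ≥0∞} (hg : Measurable (uncurry g)) {c : ℝ≥0∞}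
    (hc : ∀ b, ∫⁻ ω, g (X ω) b ∂μ ≤ c) : ∫⁻ ω, g (X ω) (Y ω) ∂μ ≤ c := by
  have : IsProbabilityMeasure (μ.map Y) := Measure.isProbabilityMeasure_map hY
  calc ∫⁻ ω, g (X ω) (Y ω) ∂μ = ∫⁻ z, uncurry g z ∂(μ.map fun ω => (X ω, Y ω)) :=
        (lintegral_map' hg.aemeasurable (hX.prodMk hY)).symm
    _ = ∫⁻ b, ∫⁻ a, g a b ∂μ.map X ∂μ.map Y := by
        rw [(indepFun_iff_map_prod_eq_prod_map_map hX hY).1 hXY,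
          lintegral_prod_symm _ hg.aemeasurable]
        rfl
    _ = ∫⁻ b, ∫⁻ ω, g (X ω) b ∂μ ∂μ.map Y :=
        lintegral_congr fun b =>
          lintegral_map' (hg.comp measurable_prodMk_right).aemeasurable hX
    _ ≤ ∫⁻ _, c ∂μ.map Y := lintegral_mono hc
    _ = c := by simp

theorem eLpNorm_comp_indepFun_le [IsProbabilityMeasure μ] {α β ε : Type*} [MeasurableSpace α]
    [MeasurableSpace β] [TopologicalSpace ε] [ContinuousENorm ε] [MeasurableSpace ε]
    [OpensMeasurableSpace ε] {p : ℝ≥0∞} (hp0 : p ≠ 0) (hp : p ≠ ∞) {X : Ω → α} {Y : Ω → β}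
    (hX : AEMeasurable X μ) (hY : AEMeasurable Y μ) (hXY : IndepFun X Y μ) {G : α → β → ε}
    (hG : Measurable (uncurry G)) {M : ℝ≥0∞} (hM : ∀ b, eLpNorm (fun ω => G (X ω) b) p μ ≤ M) :
    eLpNorm (fun ω => G (X ω) (Y ω)) p μ ≤ M := by
  lift p to NNReal using hp
  replace hp0 : p ≠ 0 := by simpa using hp0
  have hp_pos : 0 < (p : ℝ) := NNReal.coe_pos.2 (pos_iff_ne_zero.2 hp0)
  rw [← ENNReal.rpow_le_rpow_iff hp_pos, eLpNorm_nnreal_pow_eq_lintegral hp0]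
  refine lintegral_comp_indepFun_le (g := fun a b => ‖G a b‖ₑ ^ (p : ℝ)) hX hY hXY
    (hG.enorm.pow_const _) fun b => ?_
  rw [← eLpNorm_nnreal_pow_eq_lintegral hp0]
  exact ENNReal.rpow_le_rpow (hM b) hp_pos.le

variable {E : Type*} [NormedAddCommGroup E] [NormedSpace ℝ E] {p : ℝ≥0∞}

theorem eLpNorm_inv_smul_sum_le_iSup {ι : Type*} {f : ι → Ω → E}
    (hf : ∀ i, AEStronglyMeasurable (f i) μ) (hp : 1 ≤ p) {s : Finset ι} {n : ℕ} (hs : #s ≤ n) :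
    eLpNorm (fun ω => (n : ℝ)⁻¹ • ∑ i ∈ s, f i ω) p μ ≤ ⨆ i, eLpNorm (f i) p μ := by
  obtain rfl | hn := n.eq_zero_or_pos
  · simp
  calc eLpNorm (fun ω => (n : ℝ)⁻¹ • ∑ i ∈ s, f i ω) p μ
      = eLpNorm ((n : ℝ)⁻¹ • ∑ i ∈ s, f i) p μ := by simp only [← Finset.sum_apply]; rfl
    _ ≤ ‖(n : ℝ)⁻¹‖ₑ * eLpNorm (∑ i ∈ s, f i) p μ := eLpNorm_const_smul_le
    _ ≤ (n : ℝ≥0∞)⁻¹ * ∑ _i ∈ s, ⨆ i, eLpNorm (f i) p μ := by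
        rw [enorm_inv (by positivity), Real.enorm_natCast]
        gcongr
        exact (eLpNorm_sum_le (fun i _ => hf i) hp).trans
          (sum_le_sum fun i _ => le_iSup (fun i => eLpNorm (f i) p μ) i)
    _ ≤ (n : ℝ≥0∞)⁻¹ * (n * ⨆ i, eLpNorm (f i) p μ) := by
        rw [sum_const, nsmul_eq_mul]
        gcongr
    _ = ⨆ i, eLpNorm (f i) p μ := by
        rw [← mul_assoc, ENNReal.inv_mul_cancel (by positivity) (by simp), one_mul]

theorem eLpNorm_batch_average_le {N : ℕ} {S : Fin N → Ω → E}
    (hS : ∀ ℓ, AEStronglyMeasurable (S ℓ) μ) (hp : 1 ≤ p) (σ : Equiv.Perm (Fin N)) (n a : ℕ) :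
    eLpNorm (fun ω => (n : ℝ)⁻¹ • ∑ ℓ ∈ batch σ n a, S ℓ ω) p μ ≤ ⨆ ℓ, eLpNorm (S ℓ) p μ := by
  obtain rfl | hn := n.eq_zero_or_pos
  · simp -- `(0 : ℝ)⁻¹ = 0`, so the average vanishes
  exact eLpNorm_inv_smul_sum_le_iSup hS hp (card_batch_le σ hn a)

end

theorem batch_average_L2_bound_cross_species_general
    {Ω : Type*} [MeasurableSpace Ω] (μ : Measure Ω) [IsProbabilityMeasure μ]
    (pi Ni pj Nj : ℕ) (d : ℕ)
    (σi : Ω → Equiv.Perm (Fin Ni)) (σj : Ω → Equiv.Perm (Fin Nj))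
    (hσimeas : Measurable σi) (hσjmeas : Measurable σj)
    (S : Fin Nj → Ω → EuclideanSpace ℝ (Fin d))
    (hS : ∀ ℓ, MemLp (S ℓ) 2 μ)
    (hindep : IndepFun (fun ω (ℓ : Fin Nj) => S ℓ ω) (fun ω => (σi ω, σj ω)) μ)
    (k : Fin Ni) :
    eLpNorm (fun ω =>
        ((pj : ℝ))⁻¹ •
          ∑ ℓ ∈ Finset.univ.filter (fun ℓ : Fin Nj =>
              (σj ω ℓ : ℕ) / pj = (σi ω k : ℕ) / pi),
            S ℓ ω) 2 μ
    ≤ ⨆ ℓ : Fin Nj, eLpNorm (S ℓ) 2 μ := by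
  have hSmeas ℓ : AEStronglyMeasurable (S ℓ) μ := (hS ℓ).aestronglyMeasurable
  have hSvec : AEMeasurable (fun ω ℓ => S ℓ ω) μ :=
    aemeasurable_pi_lambda _ fun ℓ => (hSmeas ℓ).aemeasurable
  have hσ : AEMeasurable (fun ω => (σi ω, σj ω)) μ := (hσimeas.prodMk hσjmeas).aemeasurable
  exact eLpNorm_comp_indepFun_le
    (G := fun v q => (pj : ℝ)⁻¹ • ∑ ℓ ∈ batch q.2 pj (q.1 k / pi), v ℓ)
    two_ne_zero ENNReal.ofNat_ne_top hSvec hσ hindep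
    (measurable_from_prod_countable_left fun q => by dsimp only [uncurry]; fun_prop)
    fun q => eLpNorm_batch_average_le hSmeas one_le_two q.2 pj _

/-- **Lemma 2.2, cross-species case.** In the two-species batch
model (species `i ≠ j`, batch permutations `σᵢ, σⱼ` jointly uniformly
distributed, i.e. independent and each uniform), if `S^1, …, S^{N_j}` are
square-integrable `ℝ^d`-valued random variables whose joint σ-algebra is
independent of the one generated by `(σᵢ, σⱼ)`, then for every particle `k` of
species `i` the `L²(Ω)` norm of `(1/p_j) Σ_{ℓ : a_j(ℓ) = a_i(k)} S^ℓ` is at most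
`max_ℓ ‖S^ℓ‖_{L²(Ω)}`. -/
theorem batch_average_L2_bound_cross_species
    {Ω : Type*} [MeasurableSpace Ω] (μ : Measure Ω) [IsProbabilityMeasure μ]
    (bi pi Ni bj pj Nj : ℕ) (hbi : 1 ≤ bi) (hpi : 2 ≤ pi) (hNi : Ni = bi * pi)
    (hbj : 1 ≤ bj) (hpj : 2 ≤ pj) (hNj : Nj = bj * pj) (d : ℕ)
    (σi : Ω → Equiv.Perm (Fin Ni)) (σj : Ω → Equiv.Perm (Fin Nj))
    (hσimeas : Measurable σi) (hσjmeas : Measurable σj)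
    (hσunif : ∀ (e : Equiv.Perm (Fin Ni)) (f : Equiv.Perm (Fin Nj)),
      μ {ω | σi ω = e ∧ σj ω = f} =
        ((Fintype.card (Equiv.Perm (Fin Ni)) : ℝ≥0∞) *
          (Fintype.card (Equiv.Perm (Fin Nj)) : ℝ≥0∞))⁻¹)
    (S : Fin Nj → Ω → EuclideanSpace ℝ (Fin d))
    (hS : ∀ ℓ, MemLp (S ℓ) 2 μ)
    (hindep : IndepFun (fun ω (ℓ : Fin Nj) => S ℓ ω) (fun ω => (σi ω, σj ω)) μ)
    (k : Fin Ni) :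
    eLpNorm (fun ω =>
        ((pj : ℝ))⁻¹ •
          ∑ ℓ ∈ Finset.univ.filter (fun ℓ : Fin Nj =>
              (σj ω ℓ : ℕ) / pj = (σi ω k : ℕ) / pi),
            S ℓ ω) 2 μ
    ≤ ⨆ ℓ : Fin Nj, eLpNorm (S ℓ) 2 μ :=
  batch_average_L2_bound_cross_species_general μ pi Ni pj Nj d σi σj hσimeas hσjmeas S hS hindep k
end

section
/- (Quadratic-root comparison for the error differential inequality.) Let r > 0, a ≥ 0, b ≥ 0, and let u : [0,∞) → ℝ be differentiable and nonnegative with u(0) = 0, satisfying the differential inequality u'(t) ≤ −r·u(t) + b·√(u(t)) + a for all t ≥ 0. Then for all t ≥ 0, √(u(t)) ≤ (b + √(b² + 4ra))/(2r), i.e. u(t)^{1/2} is bounded by the positive root of the quadratic equation −r z² + b z + a = 0. -/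
/-!
For every level `c` above the positive root `c₀` of `-r z² + b z + a`, the quadratic is negative
at `c`, so the differential inequality forces `u' < 0` whenever `u = c²`. Since `u 0 = 0 ≤ c²`,
`u` can never cross the barrier `c²`; hence `√u ≤ c` for all `c > c₀`, and so `√u ≤ c₀`.
-/

open Set

theorem le_of_hasDerivWithinAt_Ici_of_deriv_neg_of_eq {f f' : ℝ → ℝ} {a M t : ℝ}
    (hf : ∀ x ∈ Ici a, HasDerivWithinAt f (f' x) (Ici a) x) (ha : f a ≤ M)
    (hlevel : ∀ x ∈ Ici a, f x = M → f' x < 0) (ht : t ∈ Ici a) : f t ≤ M :=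
  image_le_of_deriv_right_lt_deriv_boundary' (B := fun _ => M) (B' := fun _ => 0)
    (fun x hx => (hf x hx.1).continuousWithinAt.mono Icc_subset_Ici_self)
    (fun x hx => (hf x hx.1).mono (Ici_subset_Ici.mpr hx.1)) ha continuousOn_const
    (fun x _ => hasDerivWithinAt_const x _ M) (fun x hx => hlevel x hx.1) ⟨ht, le_rfl⟩

theorem quadratic_root_nonneg {r a : ℝ} (hr : 0 < r) (ha : 0 ≤ a) (b : ℝ) :
    0 ≤ (b + √(b ^ 2 + 4 * r * a)) / (2 * r) := by
  have : |b| ≤ √(b ^ 2 + 4 * r * a) := Real.abs_le_sqrt (by nlinarith)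
  have := neg_abs_le b
  exact div_nonneg (by linarith) (by positivity)

theorem lt_quadratic_of_root_lt {r a b c : ℝ} (hr : 0 < r) (hD : 0 ≤ b ^ 2 + 4 * r * a)
    (hc : (b + √(b ^ 2 + 4 * r * a)) / (2 * r) < c) :
    b * c + a < r * c ^ 2 := by
  set s := √(b ^ 2 + 4 * r * a)
  have hs : s ^ 2 = b ^ 2 + 4 * r * a := Real.sq_sqrt hD
  have hs0 : 0 ≤ s := Real.sqrt_nonneg _
  -- `r c² - b c - a = r (c - c₀)(c - c₁)` with roots `c₁ = (b - s)/(2r) ≤ c₀ = (b + s)/(2r) < c`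
  have hgap : 0 < 2 * r * c - b - s := by
    rw [div_lt_iff₀ (by positivity)] at hc; linarith
  nlinarith [mul_pos hgap (by linarith : 0 < 2 * r * c - b + s)]

theorem sqrt_bound_of_differential_inequality_general
    (r a b : ℝ) (hr : 0 < r) (ha : 0 ≤ a)
    (u u' : ℝ → ℝ)
    (hderiv : ∀ t ∈ Set.Ici (0 : ℝ), HasDerivWithinAt u (u' t) (Set.Ici 0) t)
    (hu0 : u 0 = 0)
    (hineq : ∀ t ∈ Set.Ici (0 : ℝ), u' t ≤ -r * u t + b * Real.sqrt (u t) + a) :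
    ∀ t ∈ Set.Ici (0 : ℝ),
      Real.sqrt (u t) ≤ (b + Real.sqrt (b ^ 2 + 4 * r * a)) / (2 * r) := by
  intro t ht
  refine le_of_forall_gt_imp_ge_of_dense fun c hc => ?_
  have hc0 : 0 ≤ c := (quadratic_root_nonneg hr ha b).trans hc.le
  have hquad : b * c + a < r * c ^ 2 := lt_quadratic_of_root_lt hr (by positivity) hc
  have hbarrier : u t ≤ c ^ 2 := by
    refine le_of_hasDerivWithinAt_Ici_of_deriv_neg_of_eq hderiv (by rw [hu0]; positivity)
      (fun x hx hux => ?_) ht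
    have := hineq x hx
    rw [hux, Real.sqrt_sq hc0] at this
    linarith
  exact (Real.sqrt_le_left hc0).mpr hbarrier

/-- **Quadratic-root comparison for the error differential
inequality.** Let `r > 0`, `a ≥ 0`, `b ≥ 0`, and let `u : [0,∞) → ℝ` be
nonnegative and differentiable (with derivative `u'`, one-sided at `0`) with
`u 0 = 0` and `u' t ≤ -r u t + b √(u t) + a` for all `t ≥ 0`. Then for all
`t ≥ 0`, `√(u t) ≤ (b + √(b² + 4 r a)) / (2 r)`, the positive root of
`-r z² + b z + a = 0`. -/
theorem sqrt_bound_of_differential_inequality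
    (r a b : ℝ) (hr : 0 < r) (ha : 0 ≤ a) (hb : 0 ≤ b)
    (u u' : ℝ → ℝ)
    (hderiv : ∀ t ∈ Set.Ici (0 : ℝ), HasDerivWithinAt u (u' t) (Set.Ici 0) t)
    (hnonneg : ∀ t ∈ Set.Ici (0 : ℝ), 0 ≤ u t)
    (hu0 : u 0 = 0)
    (hineq : ∀ t ∈ Set.Ici (0 : ℝ), u' t ≤ -r * u t + b * Real.sqrt (u t) + a) :
    ∀ t ∈ Set.Ici (0 : ℝ),
      Real.sqrt (u t) ≤ (b + Real.sqrt (b ^ 2 + 4 * r * a)) / (2 * r) :=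
  sqrt_bound_of_differential_inequality_general r a b hr ha u u' hderiv hu0 hineq
end
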